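/- Let G₁ be a centerless group whose automorphism tower stabilizes, let G₂ = Aut(G₁), regarded as containing G₁ via the identification of G₁ with Inn(G₁), and let A ⊆ G₁. If (G₁, A) is weakly special, then (G₂, A) is weakly special (note that the tower tops coincide: G₁^{τ_{G₁}} = G₂^{τ_{G₂}}). -/

import Mathlib

universe u

/-- The automorphism tower of a centerless group `G`: an ordinal-indexed increasing
continuous chain of groups, starting at `G`, where each successor stage is (identified
with) the automorphism group of the previous stage via the conjugation embedding. -/
structure AutTower (G : Type u) [Group G] where
  /-- the `o`-th stage `G^o` of the tower -/
  Stage : Ordinal.{u} → GrpCat.{u}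
  /-- the inclusion maps of the tower -/
  map : ∀ ⦃o₁ o₂ : Ordinal.{u}⦄, o₁ ≤ o₂ → (↥(Stage o₁) →* ↥(Stage o₂))
  map_id : ∀ (o : Ordinal.{u}) (x : ↥(Stage o)), map le_rfl x = x
  map_comp : ∀ ⦃o₁ o₂ o₃ : Ordinal.{u}⦄ (h₁ : o₁ ≤ o₂) (h₂ : o₂ ≤ o₃) (x : ↥(Stage o₁)),
      map h₂ (map h₁ x) = map (h₁.trans h₂) x
  map_injective : ∀ ⦃o₁ o₂ : Ordinal.{u}⦄ (h : o₁ ≤ o₂), Function.Injective (map h)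
  /-- the identification of `G` with the `0`-th stage -/
  emb0 : G ≃* ↥(Stage 0)
  /-- the identification of the `(o+1)`-st stage with `Aut(G^o)` -/
  succIso : ∀ o : Ordinal.{u}, ↥(Stage (o + 1)) ≃* MulAut ↥(Stage o)
  /-- under the above identification, the inclusion `G^o ≤ G^{o+1}` is `g ↦` conjugation by `g` -/
  succIso_map : ∀ (o : Ordinal.{u}) (x : ↥(Stage o)),
      succIso o (map (le_self_add : o ≤ o + 1) x) = MulAut.conj x
  /-- at limit stages the tower is continuous: `G^δ = ⋃_{α<δ} G^α` -/
  limit_covers : ∀ (o : Ordinal.{u}), Order.IsSuccLimit o → ∀ x : ↥(Stage o),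
      ∃ (o' : Ordinal.{u}) (h : o' < o), x ∈ Set.range (map h.le)

namespace AutTower

variable {G : Type u} [Group G]

/-- the embedding of `G` into the `o`-th stage of its automorphism tower -/
def embed (T : AutTower G) (o : Ordinal.{u}) : G →* ↥(T.Stage o) :=
  (T.map (zero_le : (0 : Ordinal.{u}) ≤ o)).comp T.emb0.toMonoidHom

/-- `G^{o+1} = G^o`, i.e. the inclusion of stage `o` into stage `o+1` is onto -/
def StabilizesAt (T : AutTower G) (o : Ordinal.{u}) : Prop :=
  Function.Surjective (T.map (le_self_add : o ≤ o + 1))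

end AutTower

namespace AutTower

variable {G : Type u} [Group G]

/-- The embedding of `Aut(G)` into the `σ`-th stage of the automorphism tower of `G`
(for `σ ≥ 0 + 1`), via the identification of `Aut(G)` with the stage `G^1`. -/
def autEmbed (T : AutTower G) (σ : Ordinal.{u}) (h : (0 : Ordinal.{u}) + 1 ≤ σ) :
    MulAut G →* ↥(T.Stage σ) :=
  (T.map h).comp ((T.succIso 0).symm.toMonoidHom.comp (MulAut.congr T.emb0).toMonoidHom)

/-- `(G, A)` is weakly special, computed with `G^σ` as the top of the tower:
whenever some automorphism `ψ` of `G^σ` fixes `A` pointwise and sends `x` to `y`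
(for `x, y ∈ G`, all regarded inside `G^σ` via the tower embedding), then `x = y`. -/
def WeaklySpecialVia (T : AutTower G) (σ : Ordinal.{u}) (A : Set G) : Prop :=
  ∀ x y : G,
    (∃ ψ : MulAut ↥(T.Stage σ),
      (∀ a ∈ A, ψ (T.embed σ a) = T.embed σ a) ∧ ψ (T.embed σ x) = T.embed σ y) → x = y

end AutTower

/-! Put `σ = max τ 1`. The inclusion `G^τ → G^σ` is bijective, so weak specialness of `(G, A)`
can be tested in `G^σ`, which contains `Aut(G) = G^1`. There conjugation by `x ∈ Aut(G)` acts
on `G` as `x` does, so an automorphism `ψ` of `G^σ` fixing `A` and sending `x` to `y` sends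
`x a` to `y a` for `a ∈ A`. Hence `z = y⁻¹ x` fixes `A` pointwise; then conjugation by `z`
fixes `A` and sends each `g` to `z g`, so `z = 1`. -/

namespace AutTower

variable {G : Type u} [Group G]

theorem map_bijective_of_eq (T : AutTower G) {o₁ o₂ : Ordinal.{u}} (h : o₁ ≤ o₂)
    (he : o₁ = o₂) : Function.Bijective (T.map h) := by
  subst he
  exact ⟨T.map_injective h, fun y => ⟨y, T.map_id o₁ y⟩⟩

theorem StabilizesAt.map_max_one_bijective {T : AutTower G} {τ : Ordinal.{u}}
    (hstab : T.StabilizesAt τ) : Function.Bijective (T.map (le_max_left τ 1)) := by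
  rcases le_or_gt 1 τ with hτ | hτ
  · exact T.map_bijective_of_eq _ (max_eq_left hτ).symm
  · obtain rfl : τ = 0 := Order.lt_one_iff.mp hτ
    refine ⟨T.map_injective _, fun y => ?_⟩
    obtain ⟨x, rfl⟩ :=
      (T.map_bijective_of_eq (by simp : (0 : Ordinal.{u}) + 1 ≤ max 0 1) (by simp)).2 y
    obtain ⟨w, rfl⟩ := hstab x
    exact ⟨w, (T.map_comp _ _ _).symm⟩

theorem map_embed (T : AutTower G) {o₁ o₂ : Ordinal.{u}} (h : o₁ ≤ o₂) (g : G) :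
    T.map h (T.embed o₁ g) = T.embed o₂ g :=
  T.map_comp _ _ _

theorem WeaklySpecialVia.of_map_bijective {T : AutTower G} {o₁ o₂ : Ordinal.{u}} {A : Set G}
    (hws : T.WeaklySpecialVia o₁ A) (h : o₁ ≤ o₂) (hb : Function.Bijective (T.map h)) :
    T.WeaklySpecialVia o₂ A := by
  let e := MulEquiv.ofBijective (T.map h) hb
  have he : ∀ g, e.symm (T.embed o₂ g) = T.embed o₁ g :=
    fun g => e.symm_apply_eq.2 (T.map_embed h g).symm
  rintro x y ⟨ψ, hA, hxy⟩
  refine hws x y ⟨(e.trans ψ).trans e.symm, fun a ha => ?_, ?_⟩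
  · show e.symm (ψ (T.map h (T.embed o₁ a))) = _
    rw [map_embed, hA a ha, he]
  · show e.symm (ψ (T.map h (T.embed o₁ x))) = _
    rw [map_embed, hxy, he]

theorem conj_autEmbed_embed (T : AutTower G) (σ : Ordinal.{u}) (hσ : (0 : Ordinal.{u}) + 1 ≤ σ)
    (x : MulAut G) (g : G) :
    MulAut.conj (T.autEmbed σ hσ x) (T.embed σ g) = T.embed σ (x g) := by
  set X : ↥(T.Stage (0 + 1)) := (T.succIso 0).symm (MulAut.congr T.emb0 x) with hX
  have h01 : (0 : Ordinal.{u}) ≤ 0 + 1 := le_self_add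
  have hstage1 : MulAut.conj X (T.embed (0 + 1) g) = T.embed (0 + 1) (x g) := by
    apply (T.succIso 0).injective
    rw [MulAut.conj_apply, map_mul, map_mul, map_inv, ← T.map_embed h01, ← T.map_embed h01,
      T.succIso_map, T.succIso_map, hX, MulEquiv.apply_symm_apply]
    ext v
    simp [embed, T.map_id, MulAut.congr, MulAut.inv_def, mul_assoc]
  rw [← T.map_embed hσ, ← T.map_embed hσ, ← hstage1]
  simp only [autEmbed, MulAut.conj_apply, map_mul, map_inv]
  rfl

theorem WeaklySpecialVia.eq_on_of_map_autEmbed {T : AutTower G} {σ : Ordinal.{u}} {A : Set G}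
    (hws : T.WeaklySpecialVia σ A) (hσ : (0 : Ordinal.{u}) + 1 ≤ σ) {x y : MulAut G}
    {ψ : MulAut ↥(T.Stage σ)} (hA : ∀ a ∈ A, ψ (T.embed σ a) = T.embed σ a)
    (hxy : ψ (T.autEmbed σ hσ x) = T.autEmbed σ hσ y) : ∀ a ∈ A, x a = y a := by
  intro a ha
  refine hws _ _ ⟨ψ, hA, ?_⟩
  rw [← T.conj_autEmbed_embed σ hσ, ← T.conj_autEmbed_embed σ hσ, MulAut.conj_apply,
    MulAut.conj_apply, map_mul, map_mul, map_inv, hxy, hA a ha]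

theorem WeaklySpecialVia.eq_one_of_forall_mem_eq {T : AutTower G} {σ : Ordinal.{u}} {A : Set G}
    (hws : T.WeaklySpecialVia σ A) (hσ : (0 : Ordinal.{u}) + 1 ≤ σ) {z : MulAut G}
    (hz : ∀ a ∈ A, z a = a) : z = 1 := by
  ext g
  refine (hws g (z g) ⟨MulAut.conj (T.autEmbed σ hσ z), fun a ha => ?_,
    T.conj_autEmbed_embed σ hσ z g⟩).symm
  rw [conj_autEmbed_embed, hz a ha]

end AutTower

/-- Let `G₁` be a centerless group whose automorphism tower stabilizes, with `τ` the
least stabilization ordinal, and let `G₂ = Aut(G₁)`, regarded as containing `G₁` via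
`Inn(G₁)` (i.e. as the stage `G₁^1` of the tower), and `A ⊆ G₁`. If `(G₁, A)` is
weakly special, then `(G₂, A)` is weakly special. Here the top of the automorphism
tower of `G₂` is `G₁^{max(τ,1)}`, and the tower tops indeed coincide: the inclusion
`G₁^τ → G₁^{max(τ,1)}` is bijective. -/
theorem weaklySpecial_aut_of_weaklySpecial {G : Type u} [Group G]
    (T : AutTower G) (τ : Ordinal.{u})
    (hstab : T.StabilizesAt τ)
    (A : Set G) (hws : T.WeaklySpecialVia τ A) :
    Function.Bijective (T.map (le_max_left τ 1)) ∧
      ∀ x y : MulAut G,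
        (∃ ψ : MulAut ↥(T.Stage (max τ 1)),
          (∀ a ∈ A, ψ (T.embed (max τ 1) a) = T.embed (max τ 1) a) ∧
          ψ (T.autEmbed (max τ 1) (by simp) x) =
            T.autEmbed (max τ 1) (by simp) y) → x = y := by
  have hbij := hstab.map_max_one_bijective
  refine ⟨hbij, fun x y ⟨ψ, hA, hxy⟩ => ?_⟩
  have hσ : (0 : Ordinal.{u}) + 1 ≤ max τ 1 := by simp
  have hws' := hws.of_map_bijective _ hbij
  have hxyA := hws'.eq_on_of_map_autEmbed hσ hA hxy
  have hyx : y⁻¹ * x = 1 :=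
    hws'.eq_one_of_forall_mem_eq hσ fun a ha => by
      rw [MulAut.mul_apply, hxyA a ha, MulAut.inv_apply, MulEquiv.symm_apply_apply]
  exact (inv_mul_eq_one.mp hyx).symm
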